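/- arXiv:math/0004029 — 6 statements merged into one kernel-verified Lean document; each statement's English description precedes it below -/
import Mathlib

section
/- Let A be an n × n matrix over R. Then there exist a matrix C ∈ GL(n,R) and a permutation matrix D ∈ GL(n,R) such that the matrix B = CAD = (b_{ij}) is upper triangular and satisfies: b_{ii} divides b_{jj} for all i ≤ j, and b_{ii} divides b_{ij} for all i ≤ j (equivalently, v(b_{11}) ≤ … ≤ v(b_{nn}) and v(b_{ii}) ≤ v(b_{ij}) for i ≤ j, with the convention v(0) = ∞). -/
open Matrix

section aux
variable {R : Type*} [CommRing R] {n : ℕ}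

/-- The permutation matrix of `σ`. -/
def permMat (σ : Equiv.Perm (Fin n)) : Matrix (Fin n) (Fin n) R :=
  Matrix.of fun i j => if σ i = j then 1 else 0

lemma permMat_mul_apply (σ : Equiv.Perm (Fin n)) (X : Matrix (Fin n) (Fin n) R) (i j : Fin n) :
    ((permMat σ : Matrix (Fin n) (Fin n) R) * X) i j = X (σ i) j := by
  simp [permMat, Matrix.mul_apply, ite_mul]

lemma mul_permMat_apply (σ : Equiv.Perm (Fin n)) (X : Matrix (Fin n) (Fin n) R) (i j : Fin n) :
    (X * (permMat σ : Matrix (Fin n) (Fin n) R)) i j = X i (σ.symm j) := by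
  simp [permMat, Matrix.mul_apply, mul_ite, Equiv.apply_eq_iff_eq_symm_apply]

lemma permMat_mul_permMat (σ τ : Equiv.Perm (Fin n)) :
    (permMat σ : Matrix (Fin n) (Fin n) R) * permMat τ = permMat (σ.trans τ) := by
  ext i j
  rw [permMat_mul_apply]
  simp [permMat]
  rfl

lemma permMat_refl : (permMat (Equiv.refl (Fin n)) : Matrix (Fin n) (Fin n) R) = 1 := by
  ext i j
  simp [permMat, Matrix.one_apply]
  rfl

/-- The permutation matrix as a unit. -/
def permUnit (σ : Equiv.Perm (Fin n)) : (Matrix (Fin n) (Fin n) R)ˣ :=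
  ⟨permMat σ, permMat σ.symm,
    by rw [permMat_mul_permMat, Equiv.self_trans_symm, permMat_refl],
    by rw [permMat_mul_permMat, Equiv.symm_trans_self, permMat_refl]⟩

/-- Extend a matrix by a `1` in the upper-left corner. -/
def ext1 (M : Matrix (Fin n) (Fin n) R) : Matrix (Fin (n + 1)) (Fin (n + 1)) R :=
  Matrix.of fun i j =>
    if hi : i = 0 then (if j = 0 then 1 else 0)
    else if hj : j = 0 then 0 else M (i.pred hi) (j.pred hj)

@[simp] lemma ext1_apply_zero (M : Matrix (Fin n) (Fin n) R) (j : Fin (n + 1)) :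
    ext1 M 0 j = if j = 0 then 1 else 0 := by simp [ext1]

@[simp] lemma ext1_apply_succ_zero (M : Matrix (Fin n) (Fin n) R) (i : Fin n) :
    ext1 M i.succ 0 = 0 := by simp [ext1, Fin.succ_ne_zero]

@[simp] lemma ext1_apply_succ_succ (M : Matrix (Fin n) (Fin n) R) (i j : Fin n) :
    ext1 M i.succ j.succ = M i j := by simp [ext1, Fin.succ_ne_zero]

@[simp] lemma ext1_apply_zero_succ (M : Matrix (Fin n) (Fin n) R) (j : Fin n) :
    ext1 M 0 j.succ = 0 := by simp [ext1, Fin.succ_ne_zero]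

lemma ext1_mul_apply_zero (M : Matrix (Fin n) (Fin n) R)
    (X : Matrix (Fin (n + 1)) (Fin (n + 1)) R) (j : Fin (n + 1)) :
    (ext1 M * X) 0 j = X 0 j := by
  rw [Matrix.mul_apply, Fin.sum_univ_succ]
  simp [Fin.succ_ne_zero]

lemma mul_ext1_apply_zero (M : Matrix (Fin n) (Fin n) R)
    (X : Matrix (Fin (n + 1)) (Fin (n + 1)) R) (i : Fin (n + 1)) :
    (X * ext1 M) i 0 = X i 0 := by
  rw [Matrix.mul_apply, Fin.sum_univ_succ]
  simp [Fin.succ_ne_zero]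

lemma ext1_mul_apply_succ (M : Matrix (Fin n) (Fin n) R)
    (X : Matrix (Fin (n + 1)) (Fin (n + 1)) R) (i : Fin n) (j : Fin (n + 1)) :
    (ext1 M * X) i.succ j = ∑ k, M i k * X k.succ j := by
  rw [Matrix.mul_apply, Fin.sum_univ_succ]
  simp [Fin.succ_ne_zero]

lemma mul_ext1_apply_succ (M : Matrix (Fin n) (Fin n) R)
    (X : Matrix (Fin (n + 1)) (Fin (n + 1)) R) (i : Fin (n + 1)) (j : Fin n) :
    (X * ext1 M) i j.succ = ∑ k, X i k.succ * M k j := by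
  rw [Matrix.mul_apply, Fin.sum_univ_succ]
  simp [Fin.succ_ne_zero]

lemma ext1_mul (M N : Matrix (Fin n) (Fin n) R) : ext1 M * ext1 N = ext1 (M * N) := by
  ext i j
  induction i using Fin.cases with
  | zero =>
    rw [ext1_mul_apply_zero]
    induction j using Fin.cases with
    | zero => simp
    | succ j => simp
  | succ i =>
    rw [ext1_mul_apply_succ]
    induction j using Fin.cases with
    | zero => simp
    | succ j => simp [Matrix.mul_apply]

lemma ext1_one : ext1 (1 : Matrix (Fin n) (Fin n) R) = 1 := by
  ext i j
  induction i using Fin.cases with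
  | zero =>
    induction j using Fin.cases with
    | zero => simp
    | succ j => simp [Matrix.one_apply, (Fin.succ_ne_zero j).symm, Fin.succ_ne_zero]
  | succ i =>
    induction j using Fin.cases with
    | zero => simp [Matrix.one_apply, Fin.succ_ne_zero i]
    | succ j => simp [Matrix.one_apply, Fin.succ_inj]

/-- Extension of a unit. -/
def ext1Unit (M : (Matrix (Fin n) (Fin n) R)ˣ) : (Matrix (Fin (n + 1)) (Fin (n + 1)) R)ˣ :=
  ⟨ext1 M.val, ext1 M.inv,
    by rw [ext1_mul, M.val_inv, ext1_one],
    by rw [ext1_mul, M.inv_val, ext1_one]⟩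

end aux

@[simp] lemma permUnit_val {R : Type*} [CommRing R] {n : ℕ} (σ : Equiv.Perm (Fin n)) :
    ((permUnit σ : (Matrix (Fin n) (Fin n) R)ˣ) : Matrix (Fin n) (Fin n) R) = permMat σ := rfl

@[simp] lemma ext1Unit_val {R : Type*} [CommRing R] {n : ℕ} (M : (Matrix (Fin n) (Fin n) R)ˣ) :
    ((ext1Unit M : (Matrix (Fin (n+1)) (Fin (n+1)) R)ˣ) : Matrix (Fin (n+1)) (Fin (n+1)) R)
      = ext1 (M : Matrix (Fin n) (Fin n) R) := rfl

/-- A permutation matrix: a square matrix having exactly one entry `1` in every row and every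
column, and all other entries `0`. -/
def IsPermutationMatrix {n : ℕ} {R : Type*} [CommRing R]
    (D : Matrix (Fin n) (Fin n) R) : Prop :=
  ∃ σ : Equiv.Perm (Fin n), ∀ i j, D i j = if σ i = j then 1 else 0

/-- Let `A` be an `n × n` matrix over a discrete valuation ring `R`.  Then
there exist `C ∈ GL(n, R)` and a permutation matrix `D ∈ GL(n, R)` such that `B = C * A * D`
is upper triangular and satisfies `bᵢᵢ ∣ bⱼⱼ` for all `i ≤ j` and `bᵢᵢ ∣ bᵢⱼ` for all `i ≤ j`
(equivalently, `v(b₁₁) ≤ … ≤ v(bₙₙ)` and `v(bᵢᵢ) ≤ v(bᵢⱼ)` for `i ≤ j`, with `v(0) = ∞`). -/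
theorem triangularization_over_DVR
    {R : Type*} [CommRing R] [IsDomain R] [IsDiscreteValuationRing R]
    {n : ℕ} (A : Matrix (Fin n) (Fin n) R) :
    ∃ (C D : GL (Fin n) R), IsPermutationMatrix (D : Matrix (Fin n) (Fin n) R) ∧
      ((C : Matrix (Fin n) (Fin n) R) * A * (D : Matrix (Fin n) (Fin n) R)).BlockTriangular
        (id : Fin n → Fin n) ∧
      (∀ i j : Fin n, i ≤ j →
        ((C : Matrix (Fin n) (Fin n) R) * A * (D : Matrix (Fin n) (Fin n) R)) i i ∣
          ((C : Matrix (Fin n) (Fin n) R) * A * (D : Matrix (Fin n) (Fin n) R)) j j) ∧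
      (∀ i j : Fin n, i ≤ j →
        ((C : Matrix (Fin n) (Fin n) R) * A * (D : Matrix (Fin n) (Fin n) R)) i i ∣
          ((C : Matrix (Fin n) (Fin n) R) * A * (D : Matrix (Fin n) (Fin n) R)) i j) := by
  induction n with
  | zero =>
    exact ⟨1, 1, ⟨Equiv.refl _, fun i => i.elim0⟩, fun i j _ => i.elim0,
      fun i j _ => i.elim0, fun i j _ => i.elim0⟩
  | succ n ih =>
    classical
    obtain ⟨p, -, hp⟩ := Finset.exists_min_image (Finset.univ : Finset (Fin (n+1) × Fin (n+1)))
      (fun q => IsDiscreteValuationRing.addVal R (A q.1 q.2)) ⟨⟨0, 0⟩, Finset.mem_univ _⟩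
    set b := A p.1 p.2 with hb
    have hdvd : ∀ i j, b ∣ A i j := fun i j =>
      IsDiscreteValuationRing.addVal_le_iff_dvd.mp (hp ⟨i, j⟩ (Finset.mem_univ _))
    set τ : Equiv.Perm (Fin (n+1)) := Equiv.swap 0 p.1 with hτ
    set σ : Equiv.Perm (Fin (n+1)) := Equiv.swap 0 p.2 with hσ
    set A₁ : Matrix (Fin (n+1)) (Fin (n+1)) R := permMat τ * A * permMat σ with hA₁
    have hA₁app : ∀ i j, A₁ i j = A (τ i) (σ.symm j) := by
      intro i j; rw [hA₁, mul_permMat_apply, permMat_mul_apply]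
    have hA₁00 : A₁ 0 0 = b := by
      rw [hA₁app, hτ, hσ]
      simp [Equiv.swap_apply_left]
      rfl
    have hdvd₁ : ∀ i j, b ∣ A₁ i j := fun i j => by rw [hA₁app]; exact hdvd _ _
    choose c hc using fun i : Fin n => hdvd₁ i.succ 0
    set L : Matrix (Fin (n+1)) (Fin (n+1)) R := Matrix.of fun i j =>
      if i = j then 1 else if j = 0 then -(Fin.cases 0 c i) else 0 with hLdef
    have hL0 : ∀ k : Fin n, L 0 k.succ = 0 := fun k => by
      simp [hLdef, (Fin.succ_ne_zero k).symm, Fin.succ_ne_zero]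
    have hLs0 : ∀ i : Fin n, L i.succ 0 = -(c i) := fun i => by
      simp [hLdef, Fin.succ_ne_zero]
    have hLss : ∀ i k : Fin n, L i.succ k.succ = if i = k then 1 else 0 := fun i k => by
      simp [hLdef, Fin.succ_inj, Fin.succ_ne_zero]
    have hLdiag : ∀ i, L i i = 1 := fun i => by simp [hLdef]
    have hLlow : L.BlockTriangular OrderDual.toDual := by
      intro i j hij
      have hij' : i < j := hij
      have h1 : i ≠ j := ne_of_lt hij'
      have h2 : j ≠ 0 := (lt_of_le_of_lt (Fin.zero_le i) hij').ne'
      simp [hLdef, h1, h2]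
    have hLunit : IsUnit L := by
      rw [Matrix.isUnit_iff_isUnit_det, Matrix.det_of_lowerTriangular L hLlow]
      simp [hLdiag]
    set A₂ : Matrix (Fin (n+1)) (Fin (n+1)) R := L * A₁ with hA₂
    have hA₂0 : ∀ j, A₂ 0 j = A₁ 0 j := by
      intro j
      rw [hA₂, Matrix.mul_apply, Fin.sum_univ_succ, hLdiag]
      rw [Finset.sum_eq_zero fun k _ => by rw [hL0, zero_mul]]
      ring
    have hA₂succ : ∀ (i : Fin n) j, A₂ i.succ j = A₁ i.succ j - c i * A₁ 0 j := by
      intro i j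
      rw [hA₂, Matrix.mul_apply, Fin.sum_univ_succ, hLs0]
      rw [Finset.sum_congr rfl fun k _ => by rw [hLss]]
      simp only [ite_mul, one_mul, zero_mul]
      rw [Finset.sum_ite_eq]
      simp only [Finset.mem_univ, if_pos]
      ring
    have hA₂s0 : ∀ i : Fin n, A₂ i.succ 0 = 0 := by
      intro i
      rw [hA₂succ, hc i, hA₁00]
      ring
    have hdvd₂ : ∀ i j, b ∣ A₂ i j := by
      intro i j
      induction i using Fin.cases with
      | zero => rw [hA₂0]; exact hdvd₁ _ _
      | succ i =>
        rw [hA₂succ]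
        exact dvd_sub (hdvd₁ _ _) ((hdvd₁ _ _).mul_left _)
    set A' : Matrix (Fin n) (Fin n) R := Matrix.of fun i j => A₂ i.succ j.succ with hA'
    obtain ⟨C', D', ⟨σ', hσ'⟩, htri', hdiag', hrow'⟩ := ih A'
    have hD'mat : (D' : Matrix (Fin n) (Fin n) R) = permMat σ' := by
      ext i j; rw [hσ']; rfl
    set Cfin : GL (Fin (n+1)) R := ext1Unit C' * hLunit.unit * permUnit τ with hCfin
    set Dfin : GL (Fin (n+1)) R := permUnit σ * ext1Unit D' with hDfin
    set M : Matrix (Fin (n+1)) (Fin (n+1)) R :=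
      ext1 (C' : Matrix (Fin n) (Fin n) R) * A₂ * ext1 (D' : Matrix (Fin n) (Fin n) R) with hM
    have hBM : ((Cfin : Matrix (Fin (n+1)) (Fin (n+1)) R) * A *
        (Dfin : Matrix (Fin (n+1)) (Fin (n+1)) R)) = M := by
      rw [hCfin, hDfin, hM, hA₂, hA₁]
      simp only [Units.val_mul, permUnit_val, ext1Unit_val, IsUnit.unit_spec]
      simp only [Matrix.mul_assoc]
    have hM00 : M 0 0 = b := by
      rw [hM, mul_ext1_apply_zero, ext1_mul_apply_zero, hA₂0, hA₁00]
    have hMs0 : ∀ i : Fin n, M i.succ 0 = 0 := by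
      intro i
      rw [hM, mul_ext1_apply_zero, ext1_mul_apply_succ]
      exact Finset.sum_eq_zero fun k _ => by rw [hA₂s0, mul_zero]
    have hMss : ∀ i j : Fin n, M i.succ j.succ =
        ((C' : Matrix (Fin n) (Fin n) R) * A' * (D' : Matrix (Fin n) (Fin n) R)) i j := by
      intro i j
      rw [hM, mul_ext1_apply_succ, Matrix.mul_apply]
      refine Finset.sum_congr rfl fun k _ => ?_
      rw [ext1_mul_apply_succ, Matrix.mul_apply]
      rfl
    have hM0s : ∀ j : Fin n, b ∣ M 0 j.succ := by
      intro j
      rw [hM, mul_ext1_apply_succ]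
      refine Finset.dvd_sum fun k _ => Dvd.dvd.mul_right ?_ _
      rw [ext1_mul_apply_zero]; exact hdvd₂ _ _
    have hdvdM : ∀ i j, b ∣ M i j := by
      intro i j
      induction i using Fin.cases with
      | zero =>
        induction j using Fin.cases with
        | zero => rw [hM00]
        | succ j => exact hM0s j
      | succ i =>
        induction j using Fin.cases with
        | zero => rw [hMs0]; exact dvd_zero _
        | succ j =>
          rw [hMss, Matrix.mul_apply]
          refine Finset.dvd_sum fun k _ => Dvd.dvd.mul_right ?_ _
          rw [Matrix.mul_apply]
          exact Finset.dvd_sum fun m _ => ((hdvd₂ m.succ k.succ).mul_left _)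
    refine ⟨Cfin, Dfin, ?_, ?_, ?_, ?_⟩
    · refine ⟨σ.trans (Equiv.Perm.decomposeFin.symm (0, σ')), fun i j => ?_⟩
      have hextperm : ext1 (permMat σ' : Matrix (Fin n) (Fin n) R)
          = permMat (Equiv.Perm.decomposeFin.symm (0, σ')) := by
        ext i' j'
        induction i' using Fin.cases with
        | zero =>
          induction j' using Fin.cases with
          | zero => simp [permMat, Equiv.Perm.decomposeFin_symm_apply_zero]
          | succ j' =>
            simp [permMat, Equiv.Perm.decomposeFin_symm_apply_zero,
              (Fin.succ_ne_zero j').symm, Fin.succ_ne_zero]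
        | succ i' =>
          induction j' using Fin.cases with
          | zero =>
            simp [permMat, Equiv.Perm.decomposeFin_symm_apply_succ, Equiv.swap_self,
              Fin.succ_ne_zero]
          | succ j' =>
            simp [permMat, Equiv.Perm.decomposeFin_symm_apply_succ, Equiv.swap_self,
              Fin.succ_inj]
      have : (Dfin : Matrix (Fin (n+1)) (Fin (n+1)) R)
          = permMat (σ.trans (Equiv.Perm.decomposeFin.symm (0, σ'))) := by
        rw [hDfin]
        simp only [Units.val_mul, permUnit_val, ext1Unit_val]
        rw [hD'mat, hextperm, permMat_mul_permMat]
      rw [this]; rfl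
    · rw [hBM]
      intro i j hij
      have hi0 : i ≠ 0 := (lt_of_le_of_lt (Fin.zero_le j) hij).ne'
      obtain ⟨i, rfl⟩ := Fin.eq_succ_of_ne_zero hi0
      induction j using Fin.cases with
      | zero => exact hMs0 i
      | succ j =>
        rw [hMss]
        exact htri' (by simpa [Fin.succ_lt_succ_iff] using hij)
    · rw [hBM]
      intro i j hij
      induction i using Fin.cases with
      | zero => rw [hM00]; exact hdvdM _ _
      | succ i =>
        have hj0 : j ≠ 0 := (lt_of_lt_of_le (Fin.succ_pos i) hij).ne'
        obtain ⟨j, rfl⟩ := Fin.eq_succ_of_ne_zero hj0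
        rw [hMss, hMss]
        exact hdiag' i j (by simpa [Fin.succ_le_succ_iff] using hij)
    · rw [hBM]
      intro i j hij
      induction i using Fin.cases with
      | zero => rw [hM00]; exact hdvdM _ _
      | succ i =>
        have hj0 : j ≠ 0 := (lt_of_lt_of_le (Fin.succ_pos i) hij).ne'
        obtain ⟨j, rfl⟩ := Fin.eq_succ_of_ne_zero hj0
        rw [hMss, hMss]
        exact hrow' i j (by simpa [Fin.succ_le_succ_iff] using hij)
end

section
/- Let l ≥ 1, let S = R[z_1,…,z_r]/(π^l) for some r ≥ 0, and let T be the localization of S at the prime ideal generated by (the image of) π. Then the ideals of T are exactly the ideals (π^k)T for 0 ≤ k ≤ l (where (π^0)T = T and (π^l)T = 0), these ideals are pairwise distinct, and consequently the length of T as a module over itself equals l. -/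
open MvPolynomial

set_option synthInstance.maxHeartbeats 1000000
set_option maxHeartbeats 1000000

/-- The length of an `R`-module `M` (the common length of composition series, equivalently the
supremum of the lengths of strictly increasing chains of submodules), realized as the Krull
dimension of the lattice of submodules of `M`. -/
noncomputable def moduleLength (R M : Type*) [CommRing R] [AddCommGroup M] [Module R M] :
    WithBot ℕ∞ :=
  Order.krullDim (Submodule R M)

lemma aux_ideals {T : Type*} [CommRing T] [IsLocalRing T] (t : T) (l : ℕ) (hl : 1 ≤ l)
    (hmax : IsLocalRing.maximalIdeal T = Ideal.span {t})
    (h0 : t ^ l = 0) (h1 : t ^ (l - 1) ≠ 0) :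
    (∀ J : Ideal T, ∃ k ≤ l, J = Ideal.span {t ^ k}) ∧
    (∀ k k' : ℕ, k ≤ l → k' ≤ l →
      (Ideal.span {t ^ k} : Ideal T) = Ideal.span {t ^ k'} → k = k') ∧
    (Ideal.span {t ^ l} : Ideal T) = ⊥ ∧
    Order.krullDim (Ideal T) = (l : ℕ∞) := by
  classical
  have hbot : (Ideal.span {t ^ l} : Ideal T) = ⊥ := by
    rw [h0, Ideal.span_singleton_eq_bot]
  have ht : t ∈ IsLocalRing.maximalIdeal T := by
    rw [hmax]; exact Ideal.mem_span_singleton_self t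
  -- t^k is not in span {t^(k+1)} for k < l
  have key : ∀ k : ℕ, k < l → t ^ k ∉ Ideal.span ({t ^ (k + 1)} : Set T) := by
    intro k hk hmem
    obtain ⟨a, ha⟩ := Ideal.mem_span_singleton'.mp hmem
    have hat : a * t ∈ IsLocalRing.maximalIdeal T := Ideal.mul_mem_left _ a ht
    have hu : IsUnit (1 - a * t) :=
      IsLocalRing.isUnit_one_sub_self_of_mem_nonunits _ hat
    have hz : (1 - a * t) * t ^ k = 0 := by
      have : (1 - a * t) * t ^ k = t ^ k - a * t ^ (k + 1) := by ring
      rw [this, ha, sub_self]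
    have htk : t ^ k = 0 := by
      rwa [hu.mul_right_eq_zero] at hz
    apply h1
    rw [show l - 1 = k + (l - 1 - k) by omega, pow_add, htk, zero_mul]
  have anti : ∀ k k' : ℕ, k ≤ k' →
      (Ideal.span {t ^ k'} : Ideal T) ≤ Ideal.span {t ^ k} :=
    fun k k' h => Ideal.span_singleton_le_span_singleton.mpr (pow_dvd_pow t h)
  have strictAnti : ∀ k k' : ℕ, k < k' → k' ≤ l →
      (Ideal.span {t ^ k'} : Ideal T) < Ideal.span {t ^ k} := by
    intro k k' hkk' hk'l
    refine lt_of_le_of_ne (anti _ _ hkk'.le) (fun h => key k (lt_of_lt_of_le hkk' hk'l) ?_)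
    have : t ^ k ∈ (Ideal.span {t ^ k'} : Ideal T) := by
      rw [h]; exact Ideal.mem_span_singleton_self _
    exact anti (k + 1) k' hkk' this
  have part2 : ∀ k k' : ℕ, k ≤ l → k' ≤ l →
      (Ideal.span {t ^ k} : Ideal T) = Ideal.span {t ^ k'} → k = k' := by
    intro k k' hk hk' heq
    rcases lt_trichotomy k k' with h | h | h
    · exact absurd heq.symm (strictAnti k k' h hk').ne
    · exact h
    · exact absurd heq (strictAnti k' k h hk).ne
  have part1 : ∀ J : Ideal T, ∃ k ≤ l, J = Ideal.span {t ^ k} := by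
    intro J
    by_cases hJ : J = ⊥
    · exact ⟨l, le_rfl, hJ.trans hbot.symm⟩
    · set P : ℕ → Prop := fun k => J ≤ Ideal.span {t ^ k} with hP
      have hP0 : P 0 := by simp [hP, Ideal.span_singleton_one]
      set k := Nat.findGreatest P l with hkdef
      have hPk : P k := Nat.findGreatest_spec (Nat.zero_le l) hP0
      have hkl : k ≤ l := Nat.findGreatest_le l
      have hkl' : k < l := by
        rcases lt_or_eq_of_le hkl with h | h
        · exact h
        · exfalso; apply hJ
          have := hPk
          rw [h] at this
          exact le_bot_iff.mp (hbot ▸ this)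
      have hnot : ¬ P (k + 1) :=
        Nat.findGreatest_is_greatest (Nat.lt_succ_self k) (by omega)
      obtain ⟨x, hxJ, hxns⟩ := SetLike.not_le_iff_exists.mp hnot
      obtain ⟨a, ha⟩ := Ideal.mem_span_singleton'.mp (hPk hxJ)
      have hau : IsUnit a := by
        by_contra hna
        apply hxns
        have : a ∈ IsLocalRing.maximalIdeal T := hna
        rw [hmax] at this
        obtain ⟨b, hb⟩ := Ideal.mem_span_singleton'.mp this
        rw [← ha, ← hb]
        exact Ideal.mem_span_singleton'.mpr ⟨b, by ring⟩
      obtain ⟨u, rfl⟩ := hau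
      have htk : t ^ k ∈ J := by
        have : (t : T) ^ k = ↑u⁻¹ * x := by rw [← ha, ← mul_assoc, Units.inv_mul, one_mul]
        rw [this]
        exact J.mul_mem_left _ hxJ
      exact ⟨k, hkl, le_antisymm hPk ((Ideal.span_singleton_le_iff_mem J).mpr htk)⟩
  refine ⟨part1, part2, hbot, ?_⟩
  apply le_antisymm
  · rw [Order.krullDim_eq_iSup_length]
    refine WithBot.coe_le_coe.mpr (iSup_le fun p => Nat.cast_le.mpr ?_)
    have hk : ∀ i : Fin (p.length + 1), ∃ k ≤ l, p.toFun i = Ideal.span {t ^ k} :=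
      fun i => part1 (p.toFun i)
    choose f hfl hfe using hk
    have hfanti : ∀ i j : Fin (p.length + 1), i < j → f j < f i := by
      intro i j hij
      by_contra hc
      push_neg at hc
      have := anti _ _ hc
      rw [← hfe, ← hfe] at this
      exact absurd this (not_le_of_gt (show p.toFun i < p.toFun j from p.strictMono hij))
    have hinj : Function.Injective (fun i : Fin (p.length + 1) =>
        (⟨l - f i, by omega⟩ : Fin (l + 1))) := by
      intro i j hij
      simp only [Fin.mk.injEq] at hij
      rcases lt_trichotomy i j with h | h | h
      · have := hfanti i j h; have := hfl i; omega
      · exact h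
      · have := hfanti j i h; have := hfl j; omega
    have := Fintype.card_le_of_injective _ hinj
    simp only [Fintype.card_fin] at this
    omega
  · let p : LTSeries (Ideal T) := ⟨l, fun i => Ideal.span {t ^ (l - i.1)}, by
      intro i
      have hi := i.isLt
      show Ideal.span {t ^ (l - i.1)} < Ideal.span {t ^ (l - (i.1 + 1))}
      exact strictAnti (l - (i.1 + 1)) (l - i.1) (by omega) (by omega)⟩
    have h := Order.LTSeries.length_le_krullDim p
    have hpl : p.length = l := rfl
    rw [hpl] at h
    exact_mod_cast h

/-- Let `R` be a discrete valuation ring with uniformizer `π`, let `l ≥ 1`,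
let `S = R[z₁, …, z_r]/(π^l)` for some `r ≥ 0`, and let `T` be the localization of `S` at the
prime ideal generated by (the image of) `π`.  Then the ideals of `T` are exactly the ideals
`(π^k)T` for `0 ≤ k ≤ l` (where `(π^0)T = T` and `(π^l)T = 0`), these ideals are pairwise
distinct, and consequently the length of `T` as a module over itself equals `l`. -/
theorem ideals_and_length_of_localized_truncation
    {R : Type*} [CommRing R] [IsDomain R] [IsDiscreteValuationRing R]
    (π : R) (hπ : Irreducible π)
    (l : ℕ) (hl : 1 ≤ l) (r : ℕ)
    (q : Ideal (MvPolynomial (Fin r) R ⧸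
      Ideal.span {(C (π ^ l) : MvPolynomial (Fin r) R)})) [q.IsPrime]
    (hq : q = Ideal.span {Ideal.Quotient.mk
      (Ideal.span {(C (π ^ l) : MvPolynomial (Fin r) R)}) (C π)}) :
    (∀ J : Ideal (Localization.AtPrime q), ∃ k ≤ l,
      J = Ideal.span {(algebraMap _ (Localization.AtPrime q)
        (Ideal.Quotient.mk (Ideal.span {(C (π ^ l) : MvPolynomial (Fin r) R)}) (C π))) ^ k}) ∧
    (∀ k k' : ℕ, k ≤ l → k' ≤ l →
      (Ideal.span {(algebraMap _ (Localization.AtPrime q)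
        (Ideal.Quotient.mk (Ideal.span {(C (π ^ l) : MvPolynomial (Fin r) R)}) (C π))) ^ k}
        : Ideal (Localization.AtPrime q)) =
      Ideal.span {(algebraMap _ (Localization.AtPrime q)
        (Ideal.Quotient.mk (Ideal.span {(C (π ^ l) : MvPolynomial (Fin r) R)}) (C π))) ^ k'}
      → k = k') ∧
    (Ideal.span {(algebraMap _ (Localization.AtPrime q)
      (Ideal.Quotient.mk (Ideal.span {(C (π ^ l) : MvPolynomial (Fin r) R)}) (C π))) ^ l}
      : Ideal (Localization.AtPrime q)) = ⊥ ∧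
    moduleLength (Localization.AtPrime q) (Localization.AtPrime q) = (l : ℕ∞) := by
  classical
  let A := MvPolynomial (Fin r) R
  let I : Ideal A := Ideal.span {(C (π ^ l) : A)}
  let S := A ⧸ I
  let T := Localization.AtPrime q
  let s : S := Ideal.Quotient.mk I (C π)
  let t : T := algebraMap S T s
  have hs : s = Ideal.Quotient.mk I (C π) := rfl
  have ht : t = algebraMap S T s := rfl
  -- the maximal ideal of T is (t)
  have hmax : IsLocalRing.maximalIdeal T = Ideal.span {t} := by
    rw [← Localization.AtPrime.map_eq_maximalIdeal (I := q),
      congrArg (Ideal.map (algebraMap S T)) hq, Ideal.map_span, Set.image_singleton]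
  -- t ^ l = 0
  have hsl : s ^ l = 0 := by
    rw [hs, ← map_pow, ← C_pow]
    exact Ideal.Quotient.eq_zero_iff_mem.mpr (Ideal.subset_span rfl)
  have h0 : t ^ l = 0 := by rw [ht, ← map_pow, hsl, map_zero]
  -- t ^ (l - 1) ≠ 0
  have hc : (C π : A) ≠ 0 := by simpa using hπ.ne_zero
  have h1 : t ^ (l - 1) ≠ 0 := by
    intro h
    rw [ht, ← map_pow, IsLocalization.map_eq_zero_iff q.primeCompl] at h
    obtain ⟨m, hm⟩ := h
    obtain ⟨a, ha⟩ := Ideal.Quotient.mk_surjective (m : S)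
    have hmem : a * C π ^ (l - 1) ∈ I := by
      rw [← Ideal.Quotient.eq_zero_iff_mem, map_mul, map_pow, ha]
      exact hm
    obtain ⟨f, hf⟩ := Ideal.mem_span_singleton.mp hmem
    have hCl : (C (π ^ l) : A) = C π ^ (l - 1) * C π := by
      rw [map_pow, ← pow_succ]
      congr 1
      omega
    have hcan : a = C π * f := by
      apply mul_left_cancel₀ (pow_ne_zero (l - 1) hc)
      calc (C π : A) ^ (l - 1) * a = a * C π ^ (l - 1) := by ring
        _ = C (π ^ l) * f := hf
        _ = C π ^ (l - 1) * (C π * f) := by rw [hCl]; ring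
    have hmq : (m : S) ∈ q := by
      rw [← ha, hq]
      exact Ideal.mem_span_singleton.mpr ⟨Ideal.Quotient.mk I f, by rw [hcan, map_mul]⟩
    exact m.2 hmq
  obtain ⟨p1, p2, p3, p4⟩ := aux_ideals t l hl hmax h0 h1
  exact ⟨p1, p2, p3, p4⟩
end

section
/- Let A = (a_{ij}) and B = (b_{ij}) be upper triangular n × n matrices over R, and fix m with 1 ≤ m ≤ n. Suppose that for every j with m < j ≤ n one has ∑_{i=m}^{j} b_{mi} a_{ij} = 0. Then for every i with m ≤ i ≤ n, the element b_{mm} divides b_{mi} · ∏_{j=m+1}^{i} a_{jj} in R (the empty product for i = m being 1). -/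
open Matrix Finset

/-- claim (3) in the proof of Theorem 5.1.  Let `A = (aᵢⱼ)` and `B = (bᵢⱼ)`
be upper triangular `n × n` matrices over a discrete valuation ring `R`, and fix `m`.
Suppose that for every `j` with `m < j` one has `∑_{i=m}^{j} b_{mi} a_{ij} = 0`.  Then for
every `i ≥ m`, the element `b_{mm}` divides `b_{mi} · ∏_{j=m+1}^{i} a_{jj}` (the empty
product for `i = m` being `1`). -/
theorem upper_triangular_divisibility
    {R : Type*} [CommRing R] [IsDomain R] [IsDiscreteValuationRing R]
    {n : ℕ} (A B : Matrix (Fin n) (Fin n) R)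
    (hA : A.BlockTriangular (id : Fin n → Fin n))
    (hB : B.BlockTriangular (id : Fin n → Fin n))
    (m : Fin n)
    (h : ∀ j : Fin n, m < j → ∑ i ∈ Finset.Icc m j, B m i * A i j = 0) :
    ∀ i : Fin n, m ≤ i → B m m ∣ B m i * ∏ j ∈ Finset.Ioc m i, A j j := by
  suffices H : ∀ N : ℕ, ∀ i : Fin n, (i : ℕ) < N → m ≤ i →
      B m m ∣ B m i * ∏ j ∈ Finset.Ioc m i, A j j from fun i => H n i i.isLt
  intro N
  induction N with
  | zero => exact fun i hi => absurd hi (Nat.not_lt_zero _)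
  | succ N ih =>
    intro i hiN hmi
    rcases eq_or_lt_of_le hmi with heq | hlt
    · subst heq
      simp
    · -- From the hypothesis at j = i:
      have hsum := h i hlt
      rw [← Finset.Ico_insert_right hmi, Finset.sum_insert Finset.right_notMem_Ico] at hsum
      have hkey : B m i * A i i = -∑ k ∈ Finset.Ico m i, B m k * A k i := by
        exact eq_neg_of_add_eq_zero_left hsum
      have hIoc : Finset.Ioc m i = insert i (Finset.Ioo m i) :=
        (Finset.Ioo_insert_right hlt).symm
      rw [hIoc, Finset.prod_insert Finset.right_notMem_Ioo, ← mul_assoc, hkey, neg_mul,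
        dvd_neg, Finset.sum_mul]
      refine Finset.dvd_sum fun k hk => ?_
      rw [Finset.mem_Ico] at hk
      have hsub : Finset.Ioc m k ⊆ Finset.Ioo m i := fun x hx => by
        rw [Finset.mem_Ioc] at hx; rw [Finset.mem_Ioo]; exact ⟨hx.1, lt_of_le_of_lt hx.2 hk.2⟩
      have hprod := Finset.prod_sdiff (f := fun j => A j j) hsub
      have hkN : (k : ℕ) < N := by have := hk.2; rw [Fin.lt_def] at this; omega
      have := (ih k hkN hk.1).mul_right
        (A k i * ∏ j ∈ Finset.Ioo m i \ Finset.Ioc m k, A j j)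
      convert this using 1
      rw [← hprod]
      ring
end

section
/- Let A = (a_{ij}) and B = (b_{ij}) be upper triangular n × n matrices over R, and fix m with 1 ≤ m ≤ n. Suppose that for every j with m < j ≤ n one has ∑_{i=m}^{j} b_{mi} a_{ij} = 0, and suppose there exists an index i_0 with m ≤ i_0 ≤ n such that b_{m i_0} is a unit of R. Then b_{mm} divides ∏_{j=m+1}^{i_0} a_{jj}; in particular, if all diagonal entries of A are nonzero, then v(b_{mm}) ≤ ∑_{j=m+1}^{n} v(a_{jj}). -/
open Matrix Finset IsDiscreteValuationRing

/-- Let `A = (aᵢⱼ)` and `B = (bᵢⱼ)` be upper triangular `n × n` matrices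
over a discrete valuation ring `R`, and fix `m`.  Suppose that for every `j > m` one has
`∑_{i=m}^{j} b_{mi} a_{ij} = 0`, and suppose there exists `i₀ ≥ m` such that `b_{m i₀}` is a
unit of `R`.  Then `b_{mm}` divides `∏_{j=m+1}^{i₀} a_{jj}`; in particular, if all diagonal
entries of `A` are nonzero, then `v(b_{mm}) ≤ ∑_{j=m+1}^{n} v(a_{jj})`. -/
theorem upper_triangular_divisibility_unit
    {R : Type*} [CommRing R] [IsDomain R] [IsDiscreteValuationRing R]
    {n : ℕ} (A B : Matrix (Fin n) (Fin n) R)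
    (hA : A.BlockTriangular (id : Fin n → Fin n))
    (hB : B.BlockTriangular (id : Fin n → Fin n))
    (m : Fin n)
    (h : ∀ j : Fin n, m < j → ∑ i ∈ Finset.Icc m j, B m i * A i j = 0)
    (i₀ : Fin n) (hi₀ : m ≤ i₀) (hunit : IsUnit (B m i₀)) :
    (B m m ∣ ∏ j ∈ Finset.Ioc m i₀, A j j) ∧
      ((∀ j : Fin n, A j j ≠ 0) →
        addVal R (B m m) ≤ ∑ j ∈ Finset.Ioi m, addVal R (A j j)) := by
  have key : ∀ N : ℕ, ∀ i : Fin n, (i : ℕ) ≤ N → m ≤ i →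
      B m m ∣ B m i * ∏ j ∈ Finset.Ioc m i, A j j := by
    intro N
    induction N with
    | zero =>
      intro i hiN hmi
      rcases eq_or_lt_of_le hmi with heq | hlt
      · subst heq; simp
      · exact absurd (Fin.lt_iff_val_lt_val.mp hlt) (by omega)
    | succ N IH =>
      intro i hiN hmi
      rcases eq_or_lt_of_le hmi with heq | hlt
      · subst heq; simp
      · have hsum := h i hlt
        rw [← Finset.Ico_insert_right hmi, Finset.sum_insert Finset.right_notMem_Ico] at hsum
        have hkey : B m i * A i i = -∑ k ∈ Finset.Ico m i, B m k * A k i := by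
          linear_combination hsum
        rw [← Finset.Ioo_insert_right hlt, Finset.prod_insert Finset.right_notMem_Ioo,
          ← mul_assoc, hkey, neg_mul, Finset.sum_mul, dvd_neg]
        refine Finset.dvd_sum fun k hk => ?_
        rw [Finset.mem_Ico] at hk
        have hsub : Finset.Ioc m k ⊆ Finset.Ioo m i := fun x hx => by
          rw [Finset.mem_Ioc] at hx
          exact Finset.mem_Ioo.mpr ⟨hx.1, lt_of_le_of_lt hx.2 hk.2⟩
        have h1 : B m m ∣ B m k * ∏ j ∈ Finset.Ioo m i, A j j := by
          rw [← Finset.prod_sdiff hsub, mul_left_comm]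
          exact (IH k (by have := Fin.lt_iff_val_lt_val.mp hk.2; omega) hk.1).mul_left _
        have h2 : B m k * A k i * ∏ j ∈ Finset.Ioo m i, A j j =
            (B m k * ∏ j ∈ Finset.Ioo m i, A j j) * A k i := by ring
        rw [h2]
        exact h1.mul_right _
  have hdvd : B m m ∣ ∏ j ∈ Finset.Ioc m i₀, A j j :=
    (hunit.dvd_mul_left).mp (key i₀ i₀ le_rfl hi₀)
  refine ⟨hdvd, fun _ => ?_⟩
  calc addVal R (B m m) ≤ addVal R (∏ j ∈ Finset.Ioc m i₀, A j j) :=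
        addVal_le_iff_dvd.mpr hdvd
    _ = ∑ j ∈ Finset.Ioc m i₀, addVal R (A j j) := by
        induction (Finset.Ioc m i₀) using Finset.cons_induction with
        | empty => simp
        | cons a s ha ih =>
          rw [Finset.prod_cons, Finset.sum_cons, (addVal R).map_mul, ih]
    _ ≤ ∑ j ∈ Finset.Ioi m, addVal R (A j j) := by
        refine Finset.sum_le_sum_of_subset fun x hx => ?_
        rw [Finset.mem_Ioc] at hx
        exact Finset.mem_Ioi.mpr hx.1
end

section
/- Let V be an n-dimensional vector space over a field K, let d ≥ 2, and let W_1,…,W_d be subspaces of V with dim W_i = r_i such that r_0 := ∑_{i=1}^d r_i − (d−1)n > 0 and dim(∩_{i=1}^d W_i) = r_0. Put W_0 = ∩_{i=1}^d W_i and U_j = ∩_{i ≠ j} W_i for j = 1,…,d. Then dim U_j = n − r_j + r_0 for every j, and for any choice of subspaces U'_j with U_j = W_0 ⊕ U'_j (so dim U'_j = n − r_j), V is the internal direct sum V = W_0 ⊕ U'_1 ⊕ … ⊕ U'_d. -/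
/-!
Intersecting `U j` with `W j` gives `W₀`, so `dim U j + r j ≤ n + r₀`, while subadditivity of
codimension under intersection together with `∑ r i = (d - 1) n + r₀` forces equality. Hence
`dim U' j = n - r j` and the dimensions of `W₀, U' 1, …, U' d` add up to `n`. Every member of the
family other than `U' j` lies in `W j`, and `U' j ⊓ W j = ⊥`; by the modular law this makes the
family independent, and an independent family of subspaces of total dimension `n` spans `V`.
-/

open Module

theorem biInf_compl_singleton_inf {α ι : Type*} [CompleteLattice α] (f : ι → α) (j : ι) :
    (⨅ i ∈ ({j}ᶜ : Set ι), f i) ⊓ f j = ⨅ i, f i := by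
  rw [iInf_split_single f j, inf_comm]
  rfl

section ModularLattice

variable {α ι : Type*} [CompleteLattice α] [IsModularLattice α] {a : α} {U W : ι → α}

theorem disjoint_biSup_of_forall_le_of_disjoint (ha : ∀ i, a ≤ W i)
    (hU : ∀ i j, j ≠ i → U j ≤ W i) (hUW : ∀ i, Disjoint (U i) (W i)) (s : Finset ι) :
    Disjoint a (⨆ i ∈ s, U i) := by
  classical
  induction s using Finset.induction_on with
  | empty => simp
  | insert k s hk ih =>
    have hs : ⨆ i ∈ s, U i ≤ W k := iSup₂_le fun j hj => hU k j (by rintro rfl; exact hk hj)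
    rw [Finset.iSup_insert, sup_comm]
    exact ih.disjoint_sup_right_of_disjoint_sup_left ((hUW k).symm.mono_left (sup_le (ha k) hs))

theorem iSupIndep_option_elim_of_forall_le_of_disjoint [Finite ι] (ha : ∀ i, a ≤ W i)
    (hU : ∀ i j, j ≠ i → U j ≤ W i) (hUW : ∀ i, Disjoint (U i) (W i)) :
    iSupIndep fun o : Option ι => o.elim a U := by
  have := Fintype.ofFinite ι
  rw [iSupIndep_def]
  rintro (_ | k)
  · refine (disjoint_biSup_of_forall_le_of_disjoint ha hU hUW .univ).mono_right (iSup₂_le ?_)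
    rintro (_ | j) hj
    · exact absurd rfl hj
    · exact le_biSup U (Finset.mem_univ j)
  · refine (hUW k).mono_right (iSup₂_le ?_)
    rintro (_ | j) hj
    · exact ha k
    · exact hU k j fun h => hj (congrArg some h)

end ModularLattice

section Submodule

variable {K V ι : Type*} [DivisionRing K] [AddCommGroup V] [Module K V] [FiniteDimensional K V]

theorem DirectSum.isInternal_of_iSupIndep_of_sum_finrank_eq [Fintype ι] [DecidableEq ι]
    {A : ι → Submodule K V} (hA : iSupIndep A) (hsum : ∑ i, finrank K (A i) = finrank K V) :
    DirectSum.IsInternal A := by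
  have hinj : Function.Injective (DirectSum.coeLinearMap A) := hA.dfinsupp_lsum_injective
  have hrank : finrank K (DirectSum ι fun i => A i) = finrank K V := by
    rw [finrank_directSum, hsum]
  exact ⟨hinj, (LinearMap.injective_iff_surjective_of_finrank_eq_finrank hrank).mp hinj⟩

/-- Additive form of `codim (⋂ i ∈ s, W i) ≤ ∑ i ∈ s, codim (W i)`. -/
theorem Submodule.sum_finrank_add_finrank_le_finrank_biInf_add (W : ι → Submodule K V)
    (s : Finset ι) :
    ∑ i ∈ s, finrank K (W i) + finrank K V ≤
      finrank K ↥(⨅ i ∈ s, W i) + s.card * finrank K V := by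
  classical
  induction s using Finset.induction_on with
  | empty =>
    rw [show ⨅ i ∈ (∅ : Finset ι), W i = ⊤ by simp, finrank_top]
    simp
  | insert k s hk ih =>
    have hmod := Submodule.finrank_sup_add_finrank_inf_eq (W k) (⨅ i ∈ s, W i)
    have hsup := Submodule.finrank_le (W k ⊔ ⨅ i ∈ s, W i)
    rw [Finset.sum_insert hk, Finset.card_insert_of_notMem hk, Finset.iInf_insert, add_one_mul]
    omega

/-- `h` says that the `W i` meet properly: the codimension of `⨅ i, W i` is the sum of the
codimensions of the `W i`. -/
theorem Submodule.finrank_biInf_compl_singleton_add_finrank [Fintype ι] [DecidableEq ι]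
    (W : ι → Submodule K V) (j : ι)
    (h : ∑ i, finrank K (W i) + finrank K V =
      Fintype.card ι * finrank K V + finrank K ↥(⨅ i, W i)) :
    finrank K ↥(⨅ i ∈ ({j}ᶜ : Set ι), W i) + finrank K (W j) =
      finrank K V + finrank K ↥(⨅ i, W i) := by
  have hcodim := sum_finrank_add_finrank_le_finrank_biInf_add W {j}ᶜ
  rw [show ⨅ i ∈ ({j}ᶜ : Finset ι), W i = ⨅ i ∈ ({j}ᶜ : Set ι), W i by simp] at hcodim
  have hmod := finrank_sup_add_finrank_inf_eq (⨅ i ∈ ({j}ᶜ : Set ι), W i) (W j)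
  rw [biInf_compl_singleton_inf] at hmod
  have hsup := finrank_le ((⨅ i ∈ ({j}ᶜ : Set ι), W i) ⊔ W j)
  have hsum := Finset.sum_compl_add_sum {j} fun i => finrank K (W i)
  have hcard : Fintype.card ι * finrank K V =
      ({j}ᶜ : Finset ι).card * finrank K V + finrank K V := by
    rw [← Finset.card_compl_add_card {j}, Finset.card_singleton, add_one_mul]
  rw [Finset.sum_singleton] at hsum
  omega

end Submodule

theorem complementary_subspaces_direct_sum_positive_dim_general
    {K V : Type*} [Field K] [AddCommGroup V] [Module K V] [FiniteDimensional K V]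
    {n : ℕ} (hn : finrank K V = n)
    {d : ℕ} (hd : 2 ≤ d)
    (W : Fin d → Submodule K V) (r : Fin d → ℕ)
    (hdim : ∀ i, finrank K (W i) = r i)
    (r₀ : ℕ)
    (hr₀ : ∑ i, r i = (d - 1) * n + r₀)
    (W₀ : Submodule K V) (hW₀ : W₀ = ⨅ i, W i)
    (hdimW₀ : finrank K W₀ = r₀)
    (U : Fin d → Submodule K V)
    (hU : ∀ j, U j = ⨅ i ∈ ({j}ᶜ : Set (Fin d)), W i)
    (U' : Fin d → Submodule K V)
    (hdisj : ∀ j, W₀ ⊓ U' j = ⊥)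
    (hcompl : ∀ j, W₀ ⊔ U' j = U j) :
    (∀ j, finrank K (U j) = n - r j + r₀) ∧
    DirectSum.IsInternal (fun o : Option (Fin d) => o.elim W₀ U') := by
  classical
  have hsum : ∑ i, r i + n = d * n + r₀ := by
    obtain ⟨m, rfl⟩ := Nat.exists_eq_add_of_le' (by omega : 1 ≤ d)
    rw [hr₀, Nat.add_sub_cancel, add_one_mul]
    ring
  have hdimU (j : Fin d) : finrank K (U j) + r j = n + r₀ := by
    have := Submodule.finrank_biInf_compl_singleton_add_finrank W j
    rw [← hW₀, hdimW₀, ← hU j, hn, Fintype.card_fin] at this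
    simp only [hdim] at this
    exact this hsum
  have hdimU' (j : Fin d) : finrank K (U' j) + r j = n := by
    have := Submodule.finrank_sup_add_finrank_inf_eq W₀ (U' j)
    rw [hcompl, hdisj, finrank_bot, hdimW₀] at this
    have := hdimU j
    omega
  have hU'W (j : Fin d) : Disjoint (U' j) (W j) := by
    rw [disjoint_iff_inf_le, ← hdisj j]
    refine le_inf ?_ inf_le_left
    calc U' j ⊓ W j ≤ U j ⊓ W j := inf_le_inf_right _ (hcompl j ▸ le_sup_right)
      _ = W₀ := by rw [hU, hW₀, biInf_compl_singleton_inf]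
  have hU'le (i j : Fin d) (hji : j ≠ i) : U' j ≤ W i :=
    (hcompl j ▸ le_sup_right).trans (hU j ▸ iInf₂_le i hji.symm)
  refine ⟨fun j => ?_, DirectSum.isInternal_of_iSupIndep_of_sum_finrank_eq
    (iSupIndep_option_elim_of_forall_le_of_disjoint (fun i => hW₀ ▸ iInf_le W i) hU'le hU'W) ?_⟩
  · have hrj : r j ≤ n := hn ▸ hdim j ▸ Submodule.finrank_le (W j)
    have := hdimU j
    omega
  · have hsumU' : ∑ j, finrank K (U' j) + ∑ j, r j = d * n := by
      simp [← Finset.sum_add_distrib, hdimU']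
    rw [Fintype.sum_option]
    change finrank K W₀ + ∑ j, finrank K (U' j) = finrank K V
    omega

/-- Let `V` be an `n`-dimensional vector space over a field `K`, let
`d ≥ 2`, and let `W₁, …, W_d` be subspaces of `V` with `dim Wᵢ = rᵢ` such that
`r₀ := ∑ rᵢ − (d − 1)n > 0` and `dim (⋂ᵢ Wᵢ) = r₀`.  Put `W₀ = ⋂ᵢ Wᵢ` and
`Uⱼ = ⋂_{i ≠ j} Wᵢ` for `j = 1, …, d`.  Then `dim Uⱼ = n − rⱼ + r₀` for every `j`, and for
any choice of subspaces `U'ⱼ` with `Uⱼ = W₀ ⊕ U'ⱼ` (so `dim U'ⱼ = n − rⱼ`), `V` is the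
internal direct sum `V = W₀ ⊕ U'₁ ⊕ … ⊕ U'_d` (here encoded by the family indexed by
`Option (Fin d)` sending `none` to `W₀` and `some j` to `U'ⱼ`). -/
theorem complementary_subspaces_direct_sum_positive_dim
    {K V : Type*} [Field K] [AddCommGroup V] [Module K V] [FiniteDimensional K V]
    {n : ℕ} (hn : finrank K V = n)
    {d : ℕ} (hd : 2 ≤ d)
    (W : Fin d → Submodule K V) (r : Fin d → ℕ)
    (hdim : ∀ i, finrank K (W i) = r i)
    (r₀ : ℕ) (hr₀pos : 0 < r₀)
    (hr₀ : ∑ i, r i = (d - 1) * n + r₀)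
    (W₀ : Submodule K V) (hW₀ : W₀ = ⨅ i, W i)
    (hdimW₀ : finrank K W₀ = r₀)
    (U : Fin d → Submodule K V)
    (hU : ∀ j, U j = ⨅ i ∈ ({j}ᶜ : Set (Fin d)), W i)
    (U' : Fin d → Submodule K V)
    (hdisj : ∀ j, W₀ ⊓ U' j = ⊥)
    (hcompl : ∀ j, W₀ ⊔ U' j = U j) :
    (∀ j, finrank K (U j) = n - r j + r₀) ∧
    DirectSum.IsInternal (fun o : Option (Fin d) => o.elim W₀ U') :=
  complementary_subspaces_direct_sum_positive_dim_general hn hd W r hdim r₀ hr₀ W₀ hW₀ hdimW₀ U hU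
    U' hdisj hcompl
end

section
/- Let A = (a_{ij}) ∈ M_n(R) be upper triangular with det A ≠ 0, with every column primitive (i.e. for each j, not all of a_{1j},…,a_{nj} are divisible by π), and satisfying v(a_{11}) ≤ v(a_{22}) ≤ … ≤ v(a_{nn}) and v(a_{ii}) ≤ v(a_{ij}) for all i < j (convention v(0) = ∞). Let V = K^n with standard basis e_1,…,e_n and M = R^n. For j = 1,…,n let f_j ∈ V^* be the linear form f_j(x) = ∑_{i=1}^n a_{ij} x_i, let W_j = ker f_j ⊆ V, let U_j = ∩_{i ≠ j} W_i (a one-dimensional subspace, since det A ≠ 0 forces ∩_j W_j = 0), and let L_j = U_j ∩ M. Let F = { {π^{k_1}L_1 + … + π^{k_n}L_n} : k_1,…,k_n ∈ ℤ } (the vertex set of the apartment A(H_{1K},…,H_{nK}) determined by the hyperplanes H_{jK} = P(W_j)). Then dist({M}, F) = v(a_{nn}). -/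
open Pointwise Matrix

namespace BTaux15

open Submodule Set Finset

variable {R : Type*} [CommRing R] [IsDomain R] [IsDiscreteValuationRing R]
  {K : Type*} [Field K] [Algebra R K] [IsFractionRing R K]

lemma algebraMap_ne_zero {r : R} (hr : r ≠ 0) : algebraMap R K r ≠ 0 := by
  simpa using (map_ne_zero_iff (algebraMap R K) (IsFractionRing.injective R K)).2 hr

lemma mem_stdLattice {m : ℕ} {x : Fin m → K} :
    x ∈ Submodule.span R (Set.range fun i : Fin m => (Pi.single i (1:K) : Fin m → K)) ↔
      ∀ i, ∃ r : R, algebraMap R K r = x i := by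
  constructor
  · intro hx
    induction hx using Submodule.span_induction with
    | mem x hx =>
      obtain ⟨i, rfl⟩ := hx
      intro i'
      refine ⟨if i' = i then 1 else 0, ?_⟩
      simp only [Pi.single_apply]
      split_ifs with h <;> simp
    | zero => exact fun i => ⟨0, by simp⟩
    | add x y _ _ hx hy =>
      intro i
      obtain ⟨r, hr⟩ := hx i
      obtain ⟨s, hs⟩ := hy i
      exact ⟨r + s, by simp [hr, hs]⟩
    | smul r x _ hx =>
      intro i
      obtain ⟨s, hs⟩ := hx i
      exact ⟨r * s, by simp [Pi.smul_apply, Algebra.smul_def, hs]⟩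
  · intro hx
    choose r hr using hx
    have hxe : x = ∑ i, r i • (Pi.single i (1:K) : Fin m → K) := by
      funext k
      rw [Finset.sum_apply, Finset.sum_eq_single k]
      · rw [Pi.smul_apply, Pi.single_eq_same, Algebra.smul_def, mul_one, hr]
      · intro i _ hik
        rw [Pi.smul_apply, Pi.single_eq_of_ne (Ne.symm hik), smul_zero]
      · simp
    rw [hxe]
    exact Submodule.sum_mem _ fun i _ =>
      Submodule.smul_mem _ _ (Submodule.subset_span ⟨i, rfl⟩)

lemma nonneg_of_zpow_eq_algebraMap {π : R} (hπ : Irreducible π) {m : ℤ} {r : R}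
    (h : algebraMap R K r = (algebraMap R K π) ^ m) : 0 ≤ m := by
  by_contra hm
  push_neg at hm
  have hp0 : algebraMap R K π ≠ 0 := algebraMap_ne_zero hπ.ne_zero
  have h1 : algebraMap R K (r * π ^ (-m).toNat) = 1 := by
    rw [RingHom.map_mul, RingHom.map_pow, h, ← zpow_natCast (algebraMap R K π), Int.toNat_of_nonneg (by omega),
      ← zpow_add₀ hp0]
    simp
  have h2 : r * π ^ (-m).toNat = 1 := IsFractionRing.injective R K (by rw [h1, RingHom.map_one])
  obtain ⟨t, ht⟩ : ∃ t, (-m).toNat = t + 1 := ⟨(-m).toNat - 1, by omega⟩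
  refine hπ.not_isUnit (isUnit_of_dvd_one ⟨r * π ^ t, ?_⟩)
  rw [← h2, ht, pow_succ]
  ring

lemma units_decomp {π : R} (hπ : Irreducible π) (c : Kˣ) :
    ∃ (w : Rˣ) (m : ℤ), (c : K) = algebraMap R K w * (algebraMap R K π) ^ m := by
  have hp0 : algebraMap R K π ≠ 0 := algebraMap_ne_zero hπ.ne_zero
  obtain ⟨a, s, hs, hc⟩ := IsFractionRing.div_surjective (A := R) (c : K)
  have hs0 : s ≠ 0 := nonZeroDivisors.ne_zero hs
  have ha0 : a ≠ 0 := by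
    intro h
    apply c.ne_zero
    rw [← hc, h, RingHom.map_zero, zero_div]
  obtain ⟨e₁, u₁, hu₁⟩ := IsDiscreteValuationRing.eq_unit_mul_pow_irreducible ha0 hπ
  obtain ⟨e₂, u₂, hu₂⟩ := IsDiscreteValuationRing.eq_unit_mul_pow_irreducible hs0 hπ
  refine ⟨u₁ * u₂⁻¹, (e₁ : ℤ) - e₂, ?_⟩
  have hu₂K : algebraMap R K (u₂ : R) ≠ 0 := algebraMap_ne_zero (Units.ne_zero u₂)
  rw [← hc, hu₁, hu₂, RingHom.map_mul, RingHom.map_mul, RingHom.map_pow, RingHom.map_pow]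
  rw [Units.val_mul, RingHom.map_mul, div_eq_iff (mul_ne_zero hu₂K (pow_ne_zero _ hp0))]
  have hinv : algebraMap R K ((u₂⁻¹ : Rˣ) : R) * algebraMap R K ((u₂ : Rˣ) : R) = 1 := by
    rw [← RingHom.map_mul, ← Units.val_mul, inv_mul_cancel, Units.val_one, RingHom.map_one]
  rw [← zpow_natCast (algebraMap R K π) e₁, ← zpow_natCast (algebraMap R K π) e₂]
  have : ((e₁ : ℤ) - e₂) + (e₂ : ℤ) = e₁ := by ring
  symm
  calc algebraMap R K (u₁ : R) * algebraMap R K ((u₂⁻¹:Rˣ) : R) * algebraMap R K π ^ ((e₁:ℤ) - e₂) *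
        (algebraMap R K (u₂ : R) * algebraMap R K π ^ (e₂ : ℤ))
      = algebraMap R K (u₁ : R) * (algebraMap R K ((u₂⁻¹:Rˣ):R) * algebraMap R K ((u₂:Rˣ):R)) *
        (algebraMap R K π ^ ((e₁:ℤ) - e₂) * algebraMap R K π ^ (e₂:ℤ)) := by ring
    _ = algebraMap R K (u₁ : R) * algebraMap R K π ^ ((e₁:ℤ)) := by
        rw [hinv, mul_one, ← zpow_add₀ hp0, this]
    _ = algebraMap R K (u₁ : R) * algebraMap R K π ^ ((e₁:ℕ):ℤ) := by norm_num

lemma det_dvd_ann_mul_adjugate {n : ℕ} (A : Matrix (Fin (n+1)) (Fin (n+1)) R)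
    (htri : A.BlockTriangular (id : Fin (n+1) → Fin (n+1)))
    (hdiag : ∀ i j : Fin (n + 1), i ≤ j → A i i ∣ A j j)
    (hrow : ∀ i j : Fin (n + 1), i < j → A i i ∣ A i j)
    (i j : Fin (n+1)) :
    A.det ∣ A (Fin.last n) (Fin.last n) * adjugate A i j := by
  classical
  rw [Matrix.adjugate_apply]
  conv_rhs => rw [Matrix.det_apply]
  rw [Finset.mul_sum]
  apply Finset.dvd_sum
  intro σ _
  rcases eq_or_ne (σ i) j with hσ | hσ
  · have hprod : (∏ c, (A.updateRow j (Pi.single i 1)) (σ c) c)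
        = ∏ c ∈ Finset.univ.erase i, A (σ c) c := by
      rw [← Finset.prod_erase_mul _ _ (Finset.mem_univ i), hσ, Matrix.updateRow_self,
        Pi.single_eq_same, mul_one]
      refine Finset.prod_congr rfl fun c hc => ?_
      have hc' : σ c ≠ j := fun h => (Finset.mem_erase.1 hc).1 (σ.injective (h.trans hσ.symm))
      rw [Matrix.updateRow_ne hc']
    rw [hprod, Units.smul_def, zsmul_eq_mul, mul_comm ((Equiv.Perm.sign σ : ℤ) : R),
      ← mul_assoc]
    apply Dvd.dvd.mul_right
    have himg : (Finset.univ.erase i).image σ = Finset.univ.erase j := by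
      ext k
      simp only [Finset.mem_image, Finset.mem_erase, Finset.mem_univ, and_true]
      constructor
      · rintro ⟨c, hci, rfl⟩
        exact fun h => hci (σ.injective (h.trans hσ.symm))
      · intro hk
        exact ⟨σ.symm k, fun h => hk (by rw [← σ.apply_symm_apply k, h, hσ]),
          σ.apply_symm_apply k⟩
    have h1 : (∏ k ∈ Finset.univ.erase j, A k k) ∣ ∏ c ∈ Finset.univ.erase i, A (σ c) c := by
      have : (∏ k ∈ Finset.univ.erase j, A k k) = ∏ c ∈ Finset.univ.erase i, A (σ c) (σ c) := by
        rw [← himg, Finset.prod_image (fun x _ y _ h => σ.injective h)]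
      rw [this]
      refine Finset.prod_dvd_prod_of_dvd _ _ fun c _ => ?_
      rcases lt_trichotomy (σ c) c with h | h | h
      · exact hrow _ _ h
      · rw [h]
      · rw [htri h]
        exact dvd_zero _
    calc A.det = A j j * ∏ k ∈ Finset.univ.erase j, A k k := by
          rw [Matrix.det_of_upperTriangular htri,
            ← Finset.mul_prod_erase Finset.univ (fun k => A k k) (Finset.mem_univ j)]
      _ ∣ A (Fin.last n) (Fin.last n) * ∏ c ∈ Finset.univ.erase i, A (σ c) c :=
          mul_dvd_mul (hdiag j (Fin.last n) (Fin.le_last j)) h1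
  · have : (∏ c, (A.updateRow j (Pi.single i 1)) (σ c) c) = 0 := by
      apply Finset.prod_eq_zero (Finset.mem_univ (σ.symm j))
      have hne : σ.symm j ≠ i := fun h => hσ (by rw [← h, σ.apply_symm_apply])
      rw [σ.apply_symm_apply, Matrix.updateRow_self, Pi.single_eq_of_ne hne]
    rw [this, smul_zero, mul_zero]
    exact dvd_zero _

lemma exists_generator {m : ℕ} (v : Fin m → K) (f : (Fin m → K) →ₗ[K] K)
    (hf1 : f v = 1)
    (hfR : ∀ x : Fin m → K, (∀ i, ∃ r : R, algebraMap R K r = x i) →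
      ∃ r : R, algebraMap R K r = f x) :
    ∃ g : R, g ≠ 0 ∧
      (Submodule.span K {v}).restrictScalars R ⊓
        Submodule.span R (Set.range fun i : Fin m => (Pi.single i (1:K) : Fin m → K)) =
      Submodule.span R {algebraMap R K g • v} := by
  classical
  set Mstd := Submodule.span R (Set.range fun i : Fin m => (Pi.single i (1:K) : Fin m → K))
    with hMstd
  set I : Ideal R := Submodule.comap (LinearMap.toSpanSingleton R (Fin m → K) v) Mstd with hI
  obtain ⟨g, hg⟩ : Submodule.IsPrincipal I := IsPrincipalIdealRing.principal I
  refine ⟨g, ?_, ?_⟩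
  · -- g ≠ 0 since I ≠ ⊥
    obtain ⟨b, hb⟩ := IsLocalization.exist_integer_multiples (nonZeroDivisors R)
      Finset.univ v
    have hbI : (b : R) ∈ I := by
      show (b : R) • v ∈ Mstd
      rw [hMstd, mem_stdLattice]
      intro i
      obtain ⟨r, hr⟩ := hb i (Finset.mem_univ i)
      exact ⟨r, hr⟩
    intro hg0
    rw [hg0] at hg
    rw [hg] at hbI
    simp only [Submodule.span_zero_singleton, Submodule.mem_bot] at hbI
    exact nonZeroDivisors.ne_zero b.2 hbI
  · apply le_antisymm
    · rintro x ⟨hx1, hx2⟩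
      obtain ⟨t, rfl⟩ := Submodule.mem_span_singleton.1 hx1
      have htv : f (t • v) = t := by rw [LinearMap.map_smul, hf1, smul_eq_mul, mul_one]
      obtain ⟨r, hr⟩ := hfR (t • v) ((mem_stdLattice).1 hx2)
      rw [htv] at hr
      have hrI : r ∈ I := by
        show r • v ∈ Mstd
        rwa [← algebraMap_smul K r v, hr]
      rw [hg, Ideal.submodule_span_eq, Ideal.mem_span_singleton] at hrI
      obtain ⟨r', rfl⟩ := hrI
      refine Submodule.mem_span_singleton.2 ⟨r', ?_⟩
      rw [← hr, RingHom.map_mul, mul_comm, mul_smul]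
      exact (algebraMap_smul K r' _).symm
    · rw [Submodule.span_le, Set.singleton_subset_iff]
      have hgI : g ∈ I := by
        rw [hg]
        exact Submodule.mem_span_singleton_self g
      refine ⟨?_, ?_⟩
      · show algebraMap R K g • v ∈ (Submodule.span K {v}).restrictScalars R
        exact Submodule.mem_span_singleton.2 ⟨algebraMap R K g, rfl⟩
      · show algebraMap R K g • v ∈ Mstd
        rw [algebraMap_smul]
        exact hgI

end BTaux15


section BruhatTits

variable {R : Type*} [CommRing R] [IsDomain R] [IsDiscreteValuationRing R]
  {K : Type*} [Field K] [Algebra R K] [IsFractionRing R K]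
  {V : Type*} [AddCommGroup V] [Module K V] [Module R V] [IsScalarTower R K V]

/-- The lattice classes of `M` and `N` are adjacent or equal: there are representatives
`M` of `{M}` and `c • N` of `{N}` with `π (c • N) ⊆ M ⊆ c • N`. -/
def AdjOrEq (π : R) (M N : Submodule R V) : Prop :=
  ∃ c : Kˣ, (algebraMap R K π * c) • N ≤ M ∧ M ≤ (c : K) • N

/-- There is a chain of `k + 1` lattice classes from `{M}` to `{N}` in which consecutive
members are adjacent or equal. -/
def LatticeChain (π : R) (M N : Submodule R V) (k : ℕ) : Prop :=
  ∃ f : ℕ → Submodule R V, f 0 = M ∧ f k = N ∧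
    ∀ i < k, AdjOrEq (K := K) π (f i) (f (i + 1))

/-- The combinatorial distance from the lattice class `{M}` to a set `F` of lattice classes
in the Bruhat-Tits building: the minimal length of a chain of pairwise adjacent (or equal)
lattice classes joining `{M}` to a member of `F`. -/
noncomputable def latticeDistToSet (π : R) (M : Submodule R V)
    (F : Set (Submodule R V)) : ℕ :=
  sInf {k | ∃ N ∈ F, LatticeChain (K := K) π M N k}

set_option maxHeartbeats 1600000 in
/-- the claim at the end of Section 5 of the paper.  Let
`A = (a_{ij}) ∈ M_{n+1}(R)` be upper triangular with `det A ≠ 0`, with every column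
primitive, and with `v(a₁₁) ≤ … ≤ v(a_{nn})` and `v(a_{ii}) ≤ v(a_{ij})` for `i < j`
(expressed by divisibility of matrix entries, which in the discrete valuation ring `R` is
equivalent to the valuation inequalities with the convention `v(0) = ∞`).  Let `V = K^{n+1}`
with standard basis, `M = R^{n+1}`, `f_j(x) = ∑ᵢ a_{ij} xᵢ`, `W_j = ker f_j`,
`U_j = ⋂_{i ≠ j} W_i`, `L_j = U_j ∩ M`, and
`F = { {π^{k₁} L₁ + … + π^{k_{n+1}} L_{n+1}} : kᵢ ∈ ℤ }` (the vertex set of the apartment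
determined by the hyperplanes `P(W_j)`).  Then `dist({M}, F) = v(a_{nn})`, the valuation of
the last diagonal entry. -/
theorem latticeDist_to_apartment_eq_val_last_diagonal
    {n : ℕ} (π : R) (hπ : Irreducible π)
    (A : Matrix (Fin (n + 1)) (Fin (n + 1)) R)
    (htri : A.BlockTriangular (id : Fin (n + 1) → Fin (n + 1)))
    (hdet : A.det ≠ 0)
    (hprim : ∀ j, ∃ i, ¬ π ∣ A i j)
    (hdiag : ∀ i j : Fin (n + 1), i ≤ j → A i i ∣ A j j)
    (hrow : ∀ i j : Fin (n + 1), i < j → A i i ∣ A i j)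
    (M : Submodule R (Fin (n + 1) → K))
    (hM : M = Submodule.span R
      (Set.range fun i : Fin (n + 1) => (Pi.single i (1 : K) : Fin (n + 1) → K)))
    (W : Fin (n + 1) → Submodule K (Fin (n + 1) → K))
    (hW : ∀ j, W j = LinearMap.ker (∑ i, algebraMap R K (A i j) •
      (LinearMap.proj i : (Fin (n + 1) → K) →ₗ[K] K)))
    (U : Fin (n + 1) → Submodule K (Fin (n + 1) → K))
    (hU : ∀ j, U j = ⨅ i ∈ ({j}ᶜ : Set (Fin (n + 1))), W i)
    (L : Fin (n + 1) → Submodule R (Fin (n + 1) → K))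
    (hL : ∀ j, L j = (U j).restrictScalars R ⊓ M)
    (F : Set (Submodule R (Fin (n + 1) → K)))
    (hF : F = {P | ∃ k : Fin (n + 1) → ℤ,
      P = ⨆ j, ((algebraMap R K π) ^ (k j)) • L j}) :
    (latticeDistToSet (K := K) π M F : ℕ∞) =
      IsDiscreteValuationRing.addVal R (A (Fin.last n) (Fin.last n)) := by
  classical
  set ln : Fin (n + 1) := Fin.last n with hln
  have hinj := IsFractionRing.injective R K
  have hπ0 : π ≠ 0 := hπ.ne_zero
  set p : K := algebraMap R K π with hp
  have hp0 : p ≠ 0 := BTaux15.algebraMap_ne_zero hπ0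
  set Amat : Matrix (Fin (n + 1)) (Fin (n + 1)) K := A.map (algebraMap R K) with hAmat
  have hdetAmat : Amat.det = algebraMap R K A.det := ((algebraMap R K).map_det A).symm
  have hdet0 : Amat.det ≠ 0 := by rw [hdetAmat]; exact BTaux15.algebraMap_ne_zero hdet
  have hdetu : IsUnit Amat.det := isUnit_iff_ne_zero.2 hdet0
  have hAA : Amat⁻¹ * Amat = 1 := Matrix.nonsing_inv_mul _ hdetu
  have hAA' : Amat * Amat⁻¹ = 1 := Matrix.mul_nonsing_inv _ hdetu
  set u : Fin (n + 1) → Fin (n + 1) → K := fun j => Amat⁻¹ j with hu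
  set φ : Fin (n + 1) → ((Fin (n + 1) → K) →ₗ[K] K) := fun j => ∑ i, algebraMap R K (A i j) •
      (LinearMap.proj i : (Fin (n + 1) → K) →ₗ[K] K) with hφ
  have hφ_apply : ∀ j x, φ j x = ∑ i, Amat i j * x i := by
    intro j x
    rw [hφ]
    simp only [LinearMap.sum_apply, LinearMap.smul_apply, LinearMap.proj_apply, smul_eq_mul,
      hAmat, Matrix.map_apply]
  have hφu : ∀ j j', φ j (u j') = (1 : Matrix (Fin (n + 1)) (Fin (n + 1)) K) j' j := by
    intro j j'
    rw [hφ_apply, ← hAA, Matrix.mul_apply]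
    exact Finset.sum_congr rfl fun i _ => mul_comm _ _
  have hφu_diag : ∀ j, φ j (u j) = 1 := fun j => by rw [hφu, Matrix.one_apply_eq]
  have hu0 : ∀ j, u j ≠ 0 := by
    intro j h
    have h1 := hφu_diag j
    rw [h, map_zero] at h1
    exact zero_ne_one h1
  have hMmem : ∀ x : Fin (n + 1) → K, x ∈ M ↔ ∀ i, ∃ r : R, algebraMap R K r = x i := by
    intro x
    rw [hM]
    exact BTaux15.mem_stdLattice
  have hMsingle : ∀ i, (Pi.single i (1 : K) : Fin (n + 1) → K) ∈ M := by
    intro i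
    rw [hM]
    exact Submodule.subset_span ⟨i, rfl⟩
  have hdiag0 : A ln ln ≠ 0 := by
    intro h
    apply hdet
    rw [Matrix.det_of_upperTriangular htri]
    exact Finset.prod_eq_zero (Finset.mem_univ ln) h
  obtain ⟨d, udvr, hann⟩ := IsDiscreteValuationRing.eq_unit_mul_pow_irreducible hdiag0 hπ
  -- U j is the line spanned by u j
  have hU' : ∀ j, U j = Submodule.span K {u j} := by
    intro j
    rw [hU j]
    apply le_antisymm
    · intro x hx
      simp only [Submodule.mem_iInf, Set.mem_compl_iff, Set.mem_singleton_iff] at hx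
      have hx' : ∀ i, i ≠ j → φ i x = 0 := by
        intro i hij
        have := hx i hij
        rw [hW i] at this
        exact LinearMap.mem_ker.1 this
      have h1 : x ᵥ* Amat = fun i => φ i x := by
        funext i
        rw [hφ_apply]
        simp only [Matrix.vecMul, dotProduct]
        exact Finset.sum_congr rfl fun k _ => mul_comm _ _
      have h2 : x = (x ᵥ* Amat) ᵥ* Amat⁻¹ := by
        rw [Matrix.vecMul_vecMul, hAA', Matrix.vecMul_one]
      have hxe : x = φ j x • u j := by
        conv_lhs => rw [h2, h1]
        funext k
        simp only [Matrix.vecMul, dotProduct, Pi.smul_apply, smul_eq_mul]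
        rw [Finset.sum_eq_single j]
        · intro i _ hij
          rw [hx' i hij, zero_mul]
        · simp
      rw [hxe]
      exact Submodule.mem_span_singleton.2 ⟨φ j x, rfl⟩
    · rw [Submodule.span_le, Set.singleton_subset_iff]
      simp only [SetLike.mem_coe, Submodule.mem_iInf, Set.mem_compl_iff, Set.mem_singleton_iff]
      intro i hij
      rw [hW i]
      apply LinearMap.mem_ker.2
      rw [hφu]
      exact Matrix.one_apply_ne (Ne.symm hij)
  -- generators of L j
  have hLgen' : ∀ j, ∃ g : R, g ≠ 0 ∧ L j = Submodule.span R {algebraMap R K g • u j} := by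
    intro j
    have hfR : ∀ x : Fin (n + 1) → K, (∀ i, ∃ r : R, algebraMap R K r = x i) →
        ∃ r : R, algebraMap R K r = φ j x := by
      intro x hx
      choose r hr using hx
      refine ⟨∑ i, A i j * r i, ?_⟩
      rw [hφ_apply, _root_.map_sum]
      refine Finset.sum_congr rfl fun i _ => ?_
      rw [RingHom.map_mul, hr i, hAmat, Matrix.map_apply]
    obtain ⟨g, hg0, hgen⟩ := BTaux15.exists_generator (R := R) (u j) (φ j) (hφu_diag j) hfR
    exact ⟨g, hg0, by rw [hL j, hU' j, hM]; exact hgen⟩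
  choose g hg0 hLgen using hLgen'
  choose mν vν hgν using fun j => IsDiscreteValuationRing.eq_unit_mul_pow_irreducible (hg0 j) hπ
  -- pointwise smul helpers
  have hmem_smul : ∀ (a : K) (S : Submodule R (Fin (n + 1) → K)) (x : Fin (n + 1) → K),
      x ∈ a • S ↔ ∃ y ∈ S, a • y = x := by
    intro a S x
    rw [← SetLike.mem_coe, Submodule.coe_pointwise_smul]
    exact Set.mem_smul_set
  have hsmul_le : ∀ (a : K) (P Q : Submodule R (Fin (n + 1) → K)), P ≤ Q → a • P ≤ a • Q := by
    intro a P Q h x hx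
    rw [hmem_smul] at hx ⊢
    obtain ⟨y, hy, rfl⟩ := hx
    exact ⟨y, h hy, rfl⟩
  have hsmul_map : ∀ (a : K) (S : Submodule R (Fin (n + 1) → K)),
      a • S = Submodule.map (DistribMulAction.toLinearMap R (Fin (n + 1) → K) a) S :=
    fun a S => rfl
  have hsmul_iSup : ∀ (a : K) (P : Fin (n + 1) → Submodule R (Fin (n + 1) → K)),
      a • (⨆ j, P j) = ⨆ j, a • P j := by
    intro a P
    rw [hsmul_map, Submodule.map_iSup]
    exact iSup_congr fun j => (hsmul_map a (P j)).symm
  -- the distinguished lattice N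
  set N : Submodule R (Fin (n + 1) → K) := ⨆ j, Submodule.span R {u j} with hN
  have hsingle : ∀ j : Fin (n + 1), (p ^ (-(mν j : ℤ))) • L j = Submodule.span R {u j} := by
    intro j
    rw [hLgen j, Submodule.smul_span, Set.smul_set_singleton]
    have he : (p ^ (-(mν j : ℤ))) • (algebraMap R K (g j) • u j) = (vν j : R) • u j := by
      rw [smul_smul, hgν j, RingHom.map_mul, RingHom.map_pow, ← algebraMap_smul K (vν j : R) (u j),
        ← hp]
      congr 1
      rw [mul_comm (algebraMap R K ((vν j : Rˣ) : R)) _, ← mul_assoc, ← zpow_natCast p (mν j),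
        ← zpow_add₀ hp0]
      simp
    rw [he]
    exact Submodule.span_singleton_smul_eq (vν j).isUnit _
  have hNF : N ∈ F := by
    rw [hF]
    exact ⟨fun j => -(mν j : ℤ), by rw [hN]; exact (iSup_congr hsingle).symm⟩
  have hMleN : M ≤ N := by
    rw [hM, Submodule.span_le]
    rintro _ ⟨i, rfl⟩
    simp only [SetLike.mem_coe]
    show (Pi.single i (1 : K) : Fin (n + 1) → K) ∈ N
    have hei : (Pi.single i (1 : K) : Fin (n + 1) → K) = ∑ j, A i j • u j := by
      funext k
      rw [Finset.sum_apply]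
      have hterm : ∀ j, (A i j • u j) k = Amat i j * Amat⁻¹ j k := by
        intro j
        rw [Pi.smul_apply, ← algebraMap_smul K (A i j), smul_eq_mul, hAmat, Matrix.map_apply]
      rw [Finset.sum_congr rfl fun j _ => hterm j, ← Matrix.mul_apply, hAA', Matrix.one_apply,
        Pi.single_apply]
      simp [eq_comm]
    rw [hei]
    exact Submodule.sum_mem _ fun j _ => Submodule.smul_mem _ _
      (Submodule.mem_iSup_of_mem j (Submodule.mem_span_singleton_self _))
  -- the key divisibility gives π^d N ⊆ M
  have hpdu : ∀ j k : Fin (n + 1), ∃ r : R, algebraMap R K r = (p ^ d) * Amat⁻¹ j k := by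
    intro j k
    have hdvd : A.det ∣ π ^ d * adjugate A j k := by
      have h1 := BTaux15.det_dvd_ann_mul_adjugate A htri hdiag hrow j k
      have h2 : (udvr : R) * (π ^ d * adjugate A j k) = A ln ln * adjugate A j k := by
        rw [hann]; ring
      have h3 : A.det ∣ (udvr : R) * (π ^ d * adjugate A j k) := h2 ▸ h1
      have h4 := h3.mul_left ((udvr⁻¹ : Rˣ) : R)
      have h5 : ((udvr⁻¹ : Rˣ) : R) * ((udvr : R) * (π ^ d * adjugate A j k))
          = π ^ d * adjugate A j k := by
        rw [← mul_assoc, ← Units.val_mul, inv_mul_cancel, Units.val_one, one_mul]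
      rwa [h5] at h4
    obtain ⟨r, hr⟩ := hdvd
    refine ⟨r, ?_⟩
    have hadj : adjugate Amat = (adjugate A).map (algebraMap R K) := by
      rw [hAmat]
      have h := (algebraMap R K).map_adjugate A
      rw [RingHom.mapMatrix_apply, RingHom.mapMatrix_apply] at h
      exact h.symm
    have hd : algebraMap R K A.det ≠ 0 := BTaux15.algebraMap_ne_zero hdet
    rw [Matrix.inv_def, Matrix.smul_apply, hadj, Matrix.map_apply, smul_eq_mul, hdetAmat,
      Ring.inverse_eq_inv]
    have hcalc : algebraMap R K r * algebraMap R K A.det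
        = (p ^ d) * algebraMap R K (adjugate A j k) := by
      rw [hp, ← RingHom.map_pow, ← RingHom.map_mul, ← RingHom.map_mul]
      exact congrArg (algebraMap R K) (by rw [hr]; ring)
    field_simp [hd]
    linear_combination hcalc
  have hpdN : ∀ x ∈ N, (p ^ d) • x ∈ M := by
    intro x hx
    have hle : N ≤ Submodule.comap
        ((LinearMap.lsmul K (Fin (n + 1) → K) (p ^ d)).restrictScalars R) M := by
      rw [hN]
      refine iSup_le fun j => ?_
      rw [Submodule.span_le, Set.singleton_subset_iff]
      show (p ^ d) • u j ∈ M
      rw [hMmem]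
      intro k
      obtain ⟨r, hr⟩ := hpdu j k
      exact ⟨r, by rw [hr]; rfl⟩
    exact hle hx
  -- chain from M to N of length d
  have hdS : ∃ N' ∈ F, LatticeChain (K := K) π M N' d := by
    refine ⟨N, hNF, fun i => M ⊔ ((p ^ (d - i)) • N), ?_, ?_, ?_⟩
    · show M ⊔ (p ^ (d - 0)) • N = M
      rw [Nat.sub_zero, sup_eq_left]
      intro x hx
      rw [hmem_smul] at hx
      obtain ⟨y, hy, rfl⟩ := hx
      exact hpdN y hy
    · show M ⊔ (p ^ (d - d)) • N = N
      rw [Nat.sub_self, pow_zero, one_smul, sup_eq_right.2 hMleN]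
    · intro i hi
      have hpNle : p • N ≤ N := by
        intro x hx
        rw [hmem_smul] at hx
        obtain ⟨y, hy, rfl⟩ := hx
        rw [algebraMap_smul]
        exact Submodule.smul_mem _ _ hy
      refine ⟨1, ?_, ?_⟩
      · rw [Units.val_one, mul_one]
        intro x hx
        rw [hmem_smul] at hx
        obtain ⟨y, hy, rfl⟩ := hx
        obtain ⟨m₁, hm₁, z, hz, rfl⟩ := Submodule.mem_sup.1 hy
        rw [smul_add]
        apply Submodule.add_mem
        · apply Submodule.mem_sup_left
          rw [algebraMap_smul]
          exact Submodule.smul_mem _ _ hm₁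
        · apply Submodule.mem_sup_right
          rw [hmem_smul] at hz ⊢
          obtain ⟨w, hw, rfl⟩ := hz
          refine ⟨w, hw, ?_⟩
          rw [smul_smul, ← pow_succ']
          congr 2
          omega
      · rw [Units.val_one, one_smul]
        refine sup_le_sup_left ?_ M
        have he : d - i = (d - (i + 1)) + 1 := by omega
        rw [he, pow_succ, mul_smul]
        exact hsmul_le _ _ _ hpNle
  -- chains give sandwiches
  have chain_sandwich : ∀ (k : ℕ) (M' N' : Submodule R (Fin (n + 1) → K)),
      LatticeChain (K := K) π M' N' k →
      ∃ c : Kˣ, ((p ^ k * (c : K)) • N' ≤ M') ∧ M' ≤ (c : K) • N' := by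
    intro k
    induction k with
    | zero =>
      rintro M' N' ⟨f, hf0, hfk, -⟩
      refine ⟨1, ?_, ?_⟩ <;> rw [← hfk, ← hf0] <;> simp
    | succ k ih =>
      rintro M' N' ⟨f, hf0, hfk, hadj⟩
      obtain ⟨c', h1, h2⟩ := ih (f 1) N' ⟨fun i => f (i + 1), rfl, hfk,
        fun i hi => hadj (i + 1) (by omega)⟩
      obtain ⟨c₀, h3, h4⟩ := hadj 0 (by omega)
      rw [hf0] at h3 h4
      refine ⟨c₀ * c', ?_, ?_⟩
      · have he : (p ^ (k + 1) * ((c₀ * c' : Kˣ) : K)) • N'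
            = (p * (c₀ : K)) • ((p ^ k * (c' : K)) • N') := by
          rw [smul_smul]
          congr 1
          push_cast
          ring
        rw [he]
        exact le_trans (hsmul_le _ _ _ h1) (by rw [hp]; exact h3)
      · refine le_trans h4 ?_
        have he : ((c₀ * c' : Kˣ) : K) • N' = (c₀ : K) • ((c' : K) • N') := by
          rw [smul_smul]
          exact congrArg (fun a : K => a • N') (Units.val_mul c₀ c')
        rw [he]
        exact hsmul_le _ _ _ h2
  -- lower bound
  have hlower : ∀ k, (∃ N' ∈ F, LatticeChain (K := K) π M N' k) → d ≤ k := by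
    rintro k ⟨N', hN'F, hchain⟩
    obtain ⟨c, hc1, hc2⟩ := chain_sandwich k M N' hchain
    rw [hF] at hN'F
    obtain ⟨κ, rfl⟩ := hN'F
    obtain ⟨w, e, hw⟩ := BTaux15.units_decomp hπ c
    set t : Fin (n + 1) → ℤ := fun j => e + κ j + (mν j : ℤ) with ht
    have hgenj : ∀ j : Fin (n + 1), (c : K) • ((p ^ (κ j)) • L j)
        = Submodule.span R {(p ^ (t j)) • u j} := by
      intro j
      rw [hLgen j, Submodule.smul_span, Set.smul_set_singleton, Submodule.smul_span,
        Set.smul_set_singleton]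
      have he : (c : K) • ((p ^ (κ j)) • (algebraMap R K (g j) • u j))
          = ((w * vν j : Rˣ) : R) • ((p ^ (t j)) • u j) := by
        rw [smul_smul, smul_smul, ← algebraMap_smul K ((w * vν j : Rˣ) : R), smul_smul]
        congr 1
        rw [hw, hgν j, RingHom.map_mul, RingHom.map_pow, Units.val_mul, RingHom.map_mul, ← hp]
        rw [← zpow_natCast p (mν j)]
        show _ = _ * p ^ (e + κ j + (mν j : ℤ))
        rw [zpow_add₀ hp0, zpow_add₀ hp0]
        ring
      rw [he]
      exact Submodule.span_singleton_smul_eq (w * vν j).isUnit _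
    have hcN' : (c : K) • (⨆ j, (p ^ (κ j)) • L j)
        = Submodule.span R (Set.range fun j => (p ^ (t j)) • u j) := by
      rw [hsmul_iSup, Submodule.span_range_eq_iSup]
      exact iSup_congr hgenj
    -- coefficients
    have hcoeff : ∀ i : Fin (n + 1), ∃ s : Fin (n + 1) → R,
        ∀ j, algebraMap R K (s j) * p ^ (t j) = Amat i j := by
      intro i
      have hmem : (Pi.single i (1 : K) : Fin (n + 1) → K) ∈
          Submodule.span R (Set.range fun j => (p ^ (t j)) • u j) := by
        rw [← hcN']
        exact hc2 (hMsingle i)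
      obtain ⟨s, hs⟩ := (Submodule.mem_span_range_iff_exists_fun R).1 hmem
      refine ⟨s, fun j => ?_⟩
      have happ := congrArg (φ j) hs
      have hL1 : φ j (∑ j', s j' • ((p ^ (t j')) • u j'))
          = algebraMap R K (s j) * p ^ (t j) := by
        rw [map_sum]
        rw [Finset.sum_eq_single j]
        · rw [LinearMap.map_smul_of_tower, LinearMap.map_smul, hφu_diag j, smul_eq_mul, mul_one,
            Algebra.smul_def]
        · intro j' _ hj'
          rw [LinearMap.map_smul_of_tower, LinearMap.map_smul, hφu, Matrix.one_apply_ne hj',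
            smul_zero, smul_zero]
        · simp
      have hR1 : φ j (Pi.single i (1 : K)) = Amat i j := by
        rw [hφ_apply, Finset.sum_eq_single i]
        · rw [Pi.single_eq_same, mul_one]
        · intro b _ hbi
          rw [Pi.single_eq_of_ne hbi, mul_zero]
        · simp
      rw [hL1, hR1] at happ
      exact happ
    have ht_nonpos : ∀ j, t j ≤ 0 := by
      intro j
      by_contra hpos
      push_neg at hpos
      obtain ⟨i₀, hi₀⟩ := hprim j
      obtain ⟨s, hs⟩ := hcoeff i₀
      apply hi₀
      have h1 := hs j
      have h2 : algebraMap R K (s j * π ^ (t j).toNat) = Amat i₀ j := by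
        rw [RingHom.map_mul, RingHom.map_pow, ← hp, ← zpow_natCast p ((t j).toNat),
          Int.toNat_of_nonneg (le_of_lt hpos), h1]
      have h3 : s j * π ^ (t j).toNat = A i₀ j := hinj (by rw [h2, hAmat, Matrix.map_apply])
      obtain ⟨t', ht'⟩ : ∃ t', (t j).toNat = t' + 1 := ⟨(t j).toNat - 1, by omega⟩
      rw [← h3, ht', pow_succ]
      exact ⟨s j * π ^ t', by ring⟩
    -- the last coordinate
    have hulnln : Amat ln ln * Amat⁻¹ ln ln = 1 := by
      have h1 := hφu_diag ln
      rw [hφ_apply] at h1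
      have htriK : Amat.BlockTriangular (id : Fin (n + 1) → Fin (n + 1)) := by
        intro i j hij
        rw [hAmat, Matrix.map_apply, htri hij, RingHom.map_zero]
      letI := Amat.invertibleOfIsUnitDet hdetu
      have hinvtri : Amat⁻¹.BlockTriangular (id : Fin (n + 1) → Fin (n + 1)) :=
        Matrix.blockTriangular_inv_of_blockTriangular htriK
      rw [Finset.sum_eq_single ln] at h1
      · exact h1
      · intro i _ hi
        have hilt : (i : Fin (n + 1)) < ln := lt_of_le_of_ne (Fin.le_last i) hi
        show Amat i ln * Amat⁻¹ ln i = 0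
        have hz : Amat⁻¹ ln i = 0 := hinvtri hilt
        rw [hz, mul_zero]
      · simp
    have hmemN' : (p ^ (t ln)) • u ln ∈ (c : K) • (⨆ j, (p ^ (κ j)) • L j) := by
      rw [hcN']
      exact Submodule.subset_span ⟨ln, rfl⟩
    have hmemM : (p ^ (k : ℤ)) • ((p ^ (t ln)) • u ln) ∈ M := by
      have h1 : (p ^ k * (c : K)) • (⨆ j, (p ^ (κ j)) • L j)
          = (p ^ (k : ℤ)) • ((c : K) • (⨆ j, (p ^ (κ j)) • L j)) := by
        rw [smul_smul, zpow_natCast]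
      apply hc1
      rw [h1]
      rw [hmem_smul]
      exact ⟨_, hmemN', rfl⟩
    obtain ⟨r, hr⟩ := (hMmem _).1 hmemM ln
    have hr' : algebraMap R K r = p ^ ((k : ℤ) + t ln) * Amat⁻¹ ln ln := by
      rw [hr]
      rw [Pi.smul_apply, Pi.smul_apply, smul_eq_mul, smul_eq_mul, ← mul_assoc,
        ← zpow_add₀ hp0]
    have h1 : algebraMap R K r * Amat ln ln = p ^ ((k : ℤ) + t ln) := by
      rw [hr', mul_assoc, mul_comm (Amat⁻¹ ln ln) (Amat ln ln), hulnln, mul_one]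
    have hAnnK : Amat ln ln = algebraMap R K ((udvr : Rˣ) : R) * p ^ (d : ℤ) := by
      rw [hAmat, Matrix.map_apply, hann, RingHom.map_mul, RingHom.map_pow, ← hp,
        ← zpow_natCast p d]
    have h2 : algebraMap R K (r * ((udvr : Rˣ) : R)) * p ^ (d : ℤ) = p ^ ((k : ℤ) + t ln) := by
      rw [RingHom.map_mul, mul_assoc, ← hAnnK, h1]
    have hfin : algebraMap R K (r * ((udvr : Rˣ) : R)) = p ^ ((k : ℤ) + t ln - (d : ℤ)) := by
      have hzz : p ^ ((k : ℤ) + t ln - (d : ℤ)) * p ^ (d : ℤ) = p ^ ((k : ℤ) + t ln) := by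
        rw [← zpow_add₀ hp0]
        congr 1
        ring
      exact mul_right_cancel₀ (zpow_ne_zero _ hp0) (h2.trans hzz.symm)
    have h0 : (0 : ℤ) ≤ (k : ℤ) + t ln - (d : ℤ) :=
      BTaux15.nonneg_of_zpow_eq_algebraMap hπ hfin
    have h5 := ht_nonpos ln
    omega
  -- conclusion
  have hdist : latticeDistToSet (K := K) π M F = d := by
    apply le_antisymm
    · exact Nat.sInf_le hdS
    · exact le_csInf ⟨d, hdS⟩ hlower
  rw [hdist, IsDiscreteValuationRing.addVal_def (A ln ln) udvr hπ d hann]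

end BruhatTits
end
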